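/- arXiv:0911.0318 — 4 statements merged into one kernel-verified Lean document; each statement's English description precedes it below -/
import Mathlib

section
/- Let $(\gamma_n)$ be distinct real numbers, $(v_n)$ positive with $\sum_n v_n/(1+\gamma_n^2) < \infty$, $\varphi(z) = \sum_n v_n(\frac{1}{\gamma_n-z} - \frac{\gamma_n}{1+\gamma_n^2})$, and fix $\alpha \in \mathbb{R}$. If $\lambda, \mu \in (\Gamma,v)^*$ are distinct real points with $\varphi(\lambda) = \varphi(\mu) = \alpha$, then the sequences $(1/(\lambda - \gamma_n))_n$ and $(1/(\mu - \gamma_n))_n$ are orthogonal in the weighted space $\ell^2_v$, i.e., $\sum_n \frac{v_n}{(\lambda-\gamma_n)(\mu-\gamma_n)} = 0$. -/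
/-! Subtracting the equations `φ(λ) = α` and `φ(μ) = α` termwise, the partial-fraction identity
`1/(γ-λ) - 1/(γ-μ) = (λ-μ)/((λ-γ)(μ-γ))` turns `0 = φ(λ) - φ(μ)` into
`(λ-μ) ∑ v n /((λ-γ n)(μ-γ n))`. The only analytic input is that both series for `φ` converge
absolutely, which follows from `∑ v n/(x-γ n)² < ∞` and `∑ v n/(1+γ n²) < ∞`. -/

/-- `φ(x) = ∑ v n * herglotzKernel x (γ n)`. -/
noncomputable def herglotzKernel (x g : ℝ) : ℝ := 1 / (g - x) - g / (1 + g ^ 2)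

lemma herglotzKernel_eq_mul {x g : ℝ} (h : x ≠ g) :
    herglotzKernel x g = 1 / (g - x) * ((1 + g * x) / (1 + g ^ 2)) := by
  have hgx : g - x ≠ 0 := sub_ne_zero.mpr h.symm
  unfold herglotzKernel
  field_simp
  ring

lemma abs_herglotzKernel_le {x g : ℝ} (h : x ≠ g) :
    |herglotzKernel x g| ≤ 1 / 2 * (1 / (x - g) ^ 2) + (1 + x ^ 2) / 2 * (1 / (1 + g ^ 2)) := by
  set a := 1 / (g - x)
  set b := (1 + g * x) / (1 + g ^ 2)
  have ha : a ^ 2 = 1 / (x - g) ^ 2 := by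
    rw [div_pow, one_pow, ← neg_sub, neg_sq]
  -- Cauchy–Schwarz: `(1 + g x)² ≤ (1 + g²)(1 + x²)`
  have hb : b ^ 2 ≤ (1 + x ^ 2) * (1 / (1 + g ^ 2)) := by
    rw [div_pow, mul_one_div, div_le_div_iff₀ (by positivity) (by positivity)]
    nlinarith [sq_nonneg (g - x)]
  calc |herglotzKernel x g| = |a| * |b| := by rw [herglotzKernel_eq_mul h, abs_mul]
    _ ≤ (a ^ 2 + b ^ 2) / 2 := by nlinarith [sq_nonneg (|a| - |b|), sq_abs a, sq_abs b]
    _ ≤ _ := by rw [ha]; linarith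

lemma summable_mul_herglotzKernel {ι : Type*} {γ v : ι → ℝ} {x : ℝ} (hv : ∀ n, 0 ≤ v n)
    (hadm : Summable fun n => v n / (1 + γ n ^ 2)) (hx : ∀ n, x ≠ γ n)
    (hx₂ : Summable fun n => v n / (x - γ n) ^ 2) :
    Summable fun n => v n * herglotzKernel x (γ n) := by
  refine Summable.of_norm_bounded ((hx₂.mul_left (1 / 2)).add (hadm.mul_left ((1 + x ^ 2) / 2)))
    fun n => ?_
  calc ‖v n * herglotzKernel x (γ n)‖ = v n * |herglotzKernel x (γ n)| := by
        rw [Real.norm_eq_abs, abs_mul, abs_of_nonneg (hv n)]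
    _ ≤ v n * (1 / 2 * (1 / (x - γ n) ^ 2) + (1 + x ^ 2) / 2 * (1 / (1 + γ n ^ 2))) :=
        mul_le_mul_of_nonneg_left (abs_herglotzKernel_le (hx n)) (hv n)
    _ = _ := by ring

lemma herglotzKernel_sub_herglotzKernel {x y g : ℝ} (hx : x ≠ g) (hy : y ≠ g) :
    herglotzKernel x g - herglotzKernel y g = (x - y) / ((x - g) * (y - g)) := by
  have hxg : x - g ≠ 0 := sub_ne_zero.mpr hx
  have hyg : y - g ≠ 0 := sub_ne_zero.mpr hy
  have hgx : g - x ≠ 0 := sub_ne_zero.mpr hx.symm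
  have hgy : g - y ≠ 0 := sub_ne_zero.mpr hy.symm
  unfold herglotzKernel
  field_simp
  ring

theorem stmt_5_general (γ : ℕ → ℝ) (v : ℕ → ℝ) (hv : ∀ n, 0 < v n)
    (hadm : Summable (fun n => v n / (1 + (γ n) ^ 2))) (α : ℝ) (lam mu : ℝ) (hne : lam ≠ mu)
    (hl₁ : ∀ n, lam ≠ γ n) (hl₂ : Summable (fun n => v n / (lam - γ n) ^ 2))
    (hm₁ : ∀ n, mu ≠ γ n) (hm₂ : Summable (fun n => v n / (mu - γ n) ^ 2))
    (hlα : ∑' n, v n * (1 / (γ n - lam) - γ n / (1 + (γ n) ^ 2)) = α)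
    (hmα : ∑' n, v n * (1 / (γ n - mu) - γ n / (1 + (γ n) ^ 2)) = α) :
    ∑' n, v n / ((lam - γ n) * (mu - γ n)) = 0 := by
  have hv₀ n := (hv n).le
  have hdiff : ∑' n, v n * (herglotzKernel lam (γ n) - herglotzKernel mu (γ n)) = 0 := by
    simp_rw [mul_sub]
    rw [(summable_mul_herglotzKernel hv₀ hadm hl₁ hl₂).tsum_sub
      (summable_mul_herglotzKernel hv₀ hadm hm₁ hm₂)]
    exact sub_eq_zero.mpr (hlα.trans hmα.symm)
  have hterm n : v n * (herglotzKernel lam (γ n) - herglotzKernel mu (γ n)) =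
      (lam - mu) * (v n / ((lam - γ n) * (mu - γ n))) := by
    rw [herglotzKernel_sub_herglotzKernel (hl₁ n) (hm₁ n)]
    ring
  simp_rw [hterm, tsum_mul_left] at hdiff
  exact (mul_eq_zero.mp hdiff).resolve_left (sub_ne_zero.mpr hne)

/-- If `λ ≠ μ` are real points of `(Γ,v)*` with `φ(λ) = φ(μ) = α`, then the sequences
`(1/(λ-γ n))` and `(1/(μ-γ n))` are orthogonal in `ℓ²_v`:
`∑ v n /((λ-γ n)(μ-γ n)) = 0`. -/
theorem stmt_5 (γ : ℕ → ℝ) (hγ : Function.Injective γ) (v : ℕ → ℝ) (hv : ∀ n, 0 < v n)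
    (hadm : Summable (fun n => v n / (1 + (γ n) ^ 2))) (α : ℝ) (lam mu : ℝ) (hne : lam ≠ mu)
    (hl₁ : ∀ n, lam ≠ γ n) (hl₂ : Summable (fun n => v n / (lam - γ n) ^ 2))
    (hm₁ : ∀ n, mu ≠ γ n) (hm₂ : Summable (fun n => v n / (mu - γ n) ^ 2))
    (hlα : ∑' n, v n * (1 / (γ n - lam) - γ n / (1 + (γ n) ^ 2)) = α)
    (hmα : ∑' n, v n * (1 / (γ n - mu) - γ n / (1 + (γ n) ^ 2)) = α) :
    ∑' n, v n / ((lam - γ n) * (mu - γ n)) = 0 :=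
  stmt_5_general γ v hv hadm α lam mu hne hl₁ hl₂ hm₁ hm₂ hlα hmα
end

section
/- Let $(\gamma_n)$ be distinct real numbers, $(v_n)$ positive with $\sum_n v_n/(1+\gamma_n^2)<\infty$, and let $\varphi$ be the associated Herglotz function. For any real $\alpha$, the level set $\Lambda(\alpha) = \{\lambda \in (\Gamma,v)^* \cap \mathbb{R} : \varphi(\lambda) = \alpha\}$ is countable. -/
open scoped InnerProductSpace

/-!
For `x` in the level set put `e_x n = √(v n) / (x - γ n)`, a vector of `ℓ²` precisely because
`∑ v n / (x - γ n)²` converges. Termwise, `φ(l) - φ(m) = (l - m) ∑ v n / ((l - γ n)(m - γ n))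
= (l - m) ⟪e_l, e_m⟫`, so two distinct points of one level set give orthogonal vectors. Their
first coordinates never vanish, so Bessel's inequality against the first unit vector shows that
there are only countably many of them.
-/

theorem abs_herglotz_term_le {g x w : ℝ} (hgx : g ≠ x) (hw : 0 ≤ w) :
    |w * (1 / (g - x) - g / (1 + g ^ 2))| ≤
      (w / (x - g) ^ 2 + (1 + x ^ 2) * (w / (1 + g ^ 2))) / 2 := by
  set t := 1 / (g - x)
  set b := (1 + g * x) / (1 + g ^ 2)
  have hgx' : g - x ≠ 0 := sub_ne_zero.2 hgx
  have hsplit : 1 / (g - x) - g / (1 + g ^ 2) = t * b := by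
    simp only [t, b]; field_simp; ring
  have ht : t ^ 2 = 1 / (x - g) ^ 2 := by rw [one_div_pow, ← neg_sub, neg_sq]
  -- Cauchy–Schwarz: `(1 + g x)² ≤ (1 + g²)(1 + x²)`
  have hb : b ^ 2 ≤ (1 + x ^ 2) / (1 + g ^ 2) := by
    rw [div_pow, div_le_div_iff₀ (by positivity) (by positivity)]
    nlinarith [sq_nonneg (g - x), sq_nonneg g]
  have hamgm : |t * b| ≤ (t ^ 2 + b ^ 2) / 2 := by
    nlinarith [sq_nonneg (|t| - |b|), sq_abs t, sq_abs b, abs_mul t b]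
  calc |w * (1 / (g - x) - g / (1 + g ^ 2))| = w * |t * b| := by
        rw [hsplit, abs_mul, abs_of_nonneg hw]
    _ ≤ w * ((t ^ 2 + b ^ 2) / 2) := by gcongr
    _ ≤ w * ((1 / (x - g) ^ 2 + (1 + x ^ 2) / (1 + g ^ 2)) / 2) := by rw [ht]; gcongr
    _ = _ := by ring

theorem summable_herglotz_term {γ v : ℕ → ℝ} {x : ℝ} (hv : ∀ n, 0 ≤ v n) (hx : ∀ n, x ≠ γ n)
    (hs : Summable fun n => v n / (x - γ n) ^ 2) (hadm : Summable fun n => v n / (1 + γ n ^ 2)) :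
    Summable fun n => v n * (1 / (γ n - x) - γ n / (1 + γ n ^ 2)) :=
  ((hs.add (hadm.mul_left (1 + x ^ 2))).div_const 2).of_norm_bounded fun n =>
    abs_herglotz_term_le (hx n).symm (hv n)

theorem herglotz_term_sub_herglotz_term {g w l m : ℝ} (hl : l ≠ g) (hm : m ≠ g) :
    w * (1 / (g - l) - g / (1 + g ^ 2)) - w * (1 / (g - m) - g / (1 + g ^ 2)) =
      (l - m) * (w / ((l - g) * (m - g))) := by
  have hlg : l - g ≠ 0 := sub_ne_zero.2 hl
  have hmg : m - g ≠ 0 := sub_ne_zero.2 hm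
  have hgl : g - l ≠ 0 := sub_ne_zero.2 hl.symm
  have hgm : g - m ≠ 0 := sub_ne_zero.2 hm.symm
  field_simp
  ring

theorem hasSum_div_mul_eq_zero_of_tsum_eq {γ v : ℕ → ℝ} (hv : ∀ n, 0 ≤ v n)
    (hadm : Summable fun n => v n / (1 + γ n ^ 2)) {α l m : ℝ} (hlm : l ≠ m)
    (hl : ∀ n, l ≠ γ n) (hls : Summable fun n => v n / (l - γ n) ^ 2)
    (hlα : ∑' n, v n * (1 / (γ n - l) - γ n / (1 + γ n ^ 2)) = α)
    (hm : ∀ n, m ≠ γ n) (hms : Summable fun n => v n / (m - γ n) ^ 2)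
    (hmα : ∑' n, v n * (1 / (γ n - m) - γ n / (1 + γ n ^ 2)) = α) :
    HasSum (fun n => v n / ((l - γ n) * (m - γ n))) 0 := by
  have hdiff := (summable_herglotz_term hv hl hls hadm).hasSum.sub
    (summable_herglotz_term hv hm hms hadm).hasSum
  rw [hlα, hmα, sub_self] at hdiff
  simp only [herglotz_term_sub_herglotz_term (hl _) (hm _)] at hdiff
  rwa [← mul_zero (l - m), hasSum_mul_left_iff (sub_ne_zero.2 hlm)] at hdiff

section InnerProductSpace

variable {𝕜 E ι : Type*} [RCLike 𝕜] [NormedAddCommGroup E] [InnerProductSpace 𝕜 E]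

theorem orthonormal_inv_norm_smul {w : ι → E} (hw : ∀ i, w i ≠ 0)
    (horth : Pairwise fun i j => ⟪w i, w j⟫_𝕜 = 0) :
    Orthonormal 𝕜 fun i => (‖w i‖⁻¹ : 𝕜) • w i := by
  refine ⟨fun i => norm_smul_inv_norm (hw i), fun i j hij => ?_⟩
  dsimp only
  rw [inner_smul_left, inner_smul_right, horth hij, mul_zero, mul_zero]

theorem Orthonormal.countable_of_inner_ne_zero {u : ι → E} (hu : Orthonormal 𝕜 u) (x : E)
    (hx : ∀ i, ⟪u i, x⟫_𝕜 ≠ 0) : Countable ι := by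
  have hsupp := (hu.inner_products_summable x).countable_support
  rw [Function.support_eq_univ fun i => pow_ne_zero 2 (norm_ne_zero_iff.2 (hx i))] at hsupp
  exact Set.countable_univ_iff.1 hsupp

theorem countable_of_pairwise_inner_eq_zero_of_inner_ne_zero {w : ι → E}
    (horth : Pairwise fun i j => ⟪w i, w j⟫_𝕜 = 0) (x : E) (hx : ∀ i, ⟪w i, x⟫_𝕜 ≠ 0) :
    Countable ι := by
  have hw : ∀ i, w i ≠ 0 := fun i h => hx i (by rw [h, inner_zero_left])
  refine (orthonormal_inv_norm_smul hw horth).countable_of_inner_ne_zero x fun i => ?_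
  rw [inner_smul_left]
  exact mul_ne_zero (by simpa using hw i) (hx i)

end InnerProductSpace

theorem lp.countable_of_pairwise_inner_eq_zero {α ι : Type*} {f : ι → lp (fun _ : α => ℝ) 2}
    (horth : Pairwise fun i j => ⟪f i, f j⟫_ℝ = 0) (a : α) (ha : ∀ i, f i a ≠ 0) :
    Countable ι := by
  classical
  refine countable_of_pairwise_inner_eq_zero_of_inner_ne_zero horth (lp.single 2 a 1) fun i => ?_
  simpa [lp.inner_single_right] using ha i

theorem memℓp_sqrt_div_sub {γ v : ℕ → ℝ} {x : ℝ} (hv : ∀ n, 0 ≤ v n)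
    (hs : Summable fun n => v n / (x - γ n) ^ 2) :
    Memℓp (fun n => √(v n) / (x - γ n)) 2 := by
  refine (memℓp_gen_iff (by norm_num)).2 (hs.congr fun n => ?_)
  rw [ENNReal.toReal_ofNat, Real.rpow_two, Real.norm_eq_abs, sq_abs, div_pow, Real.sq_sqrt (hv n)]

theorem stmt_6_general (γ : ℕ → ℝ) (v : ℕ → ℝ) (hv : ∀ n, 0 < v n)
    (hadm : Summable (fun n => v n / (1 + (γ n) ^ 2))) (α : ℝ) :
    Set.Countable {x : ℝ | (∀ n, x ≠ γ n) ∧ Summable (fun n => v n / (x - γ n) ^ 2) ∧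
      ∑' n, v n * (1 / (γ n - x) - γ n / (1 + (γ n) ^ 2)) = α} := by
  rw [← Set.countable_coe_iff]
  have hv' : ∀ n, 0 ≤ v n := fun n => (hv n).le
  refine lp.countable_of_pairwise_inner_eq_zero
    (f := fun x => (⟨_, memℓp_sqrt_div_sub hv' x.2.2.1⟩ : lp (fun _ : ℕ => ℝ) 2))
    (fun l m hlm => ?_) 0
    fun x => div_ne_zero (Real.sqrt_ne_zero'.2 (hv 0)) (sub_ne_zero.2 (x.2.1 0))
  have hzero := hasSum_div_mul_eq_zero_of_tsum_eq hv' hadm (Subtype.coe_injective.ne hlm)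
    l.2.1 l.2.2.1 l.2.2.2 m.2.1 m.2.2.1 m.2.2.2
  dsimp only
  rw [lp.inner_eq_tsum, ← hzero.tsum_eq]
  refine tsum_congr fun n => ?_
  rw [Real.inner_apply]
  exact (div_mul_div_comm _ _ _ _).trans (by rw [Real.mul_self_sqrt (hv' n)])

/-- For any real `α`, the level set `Λ(α) = {λ ∈ (Γ,v)* ∩ ℝ : φ(λ) = α}` is countable. -/
theorem stmt_6 (γ : ℕ → ℝ) (hγ : Function.Injective γ) (v : ℕ → ℝ) (hv : ∀ n, 0 < v n)
    (hadm : Summable (fun n => v n / (1 + (γ n) ^ 2))) (α : ℝ) :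
    Set.Countable {x : ℝ | (∀ n, x ≠ γ n) ∧ Summable (fun n => v n / (x - γ n) ^ 2) ∧
      ∑' n, v n * (1 / (γ n - x) - γ n / (1 + (γ n) ^ 2)) = α} :=
  stmt_6_general γ v hv hadm α
end

section
/- Let $\Gamma = (\gamma_n)$ and $\Lambda = (\lambda_j)$ be disjoint sequences of distinct complex numbers, $(v_n), (w_j)$ positive weights, with $\Lambda \subset (\Gamma,v)^*$. If the discrete Hilbert transform $H_v(\Gamma,\Lambda) : \ell^2_v \to \ell^2_w$, $(a_n) \mapsto (\sum_n a_n v_n/(\lambda_j - \gamma_n))_j$, is unitary, then $\Gamma \cup \Lambda$ is contained in a single circle or straight line in $\mathbb{C}$, provided $\Gamma \cup \Lambda$ contains at least four points. -/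
/-!
Applying the isometry to sequences supported at two points and polarizing shows that the
kernels `e n j = (λ_j - γ_n)⁻¹` are orthogonal in `ℓ²_w`, with `‖e n‖² = 1 / v n`.
For distinct `p, q, n`, partial fractions write `|e n j|² U j`, where
`U j = X j / conj (X j)` with `X j = (λ_j - γ_q) conj (λ_j - γ_p)` is unimodular, as
`(α e n + β e p) conj (α' e n + β' e q)`. By orthogonality the average of `U` against the
probability weights `v n w j |e n j|²` is a unimodular constant `κ`, so strict convexity of
the disc forces `U j = κ` for every `j`. Hence, with `ρ z = (z - γ 1) conj (z - γ 0)`, all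
`ρ z` for `z ∈ Γ ∪ Λ` lie on one real line through the origin, and that condition is the
equation of a circle or line through `γ 0` and `γ 1`.
-/

open Complex ComplexConjugate

theorem eq_one_of_re_eq_one_of_norm_le_one {z : ℂ} (hre : z.re = 1) (hz : ‖z‖ ≤ 1) : z = 1 := by
  have hsq : normSq z ≤ 1 := by
    rw [← Complex.sq_norm]
    nlinarith [norm_nonneg z]
  rw [normSq_apply, hre] at hsq
  exact Complex.ext hre (by simp; nlinarith)

theorem im_mul_conj_eq_zero_of_common {x y z : ℂ} (hy : y ≠ 0) (hx : (y * conj x).im = 0)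
    (hz : (y * conj z).im = 0) : (x * conj z).im = 0 := by
  have h : conj (y * conj x) * (y * conj z) = normSq y * (x * conj z) := by
    rw [← Complex.mul_conj]; simp only [map_mul, conj_conj]; ring
  have him := congrArg Complex.im h
  rw [Complex.mul_im, Complex.conj_re, Complex.conj_im, hx, hz, Complex.im_ofReal_mul] at him
  simpa [normSq_eq_zero, hy] using him.symm

theorem im_mul_conj_eq_zero_of_div_conj_eq_div_conj {x y : ℂ} (h : x / conj x = y / conj y) :
    (x * conj y).im = 0 := by
  rcases eq_or_ne x 0 with rfl | hx
  · simp
  rcases eq_or_ne y 0 with rfl | hy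
  · simp
  rw [div_eq_div_iff ((map_ne_zero _).2 hx) ((map_ne_zero _).2 hy)] at h
  rw [← Complex.conj_eq_iff_im, map_mul, conj_conj, mul_comm, h, mul_comm]

theorem hasSum_pair {M : Type*} [AddCommMonoid M] [TopologicalSpace M] {f : ℕ → M} {n m : ℕ}
    (hnm : n ≠ m) (hf : ∀ k, k ≠ n → k ≠ m → f k = 0) : HasSum f (f n + f m) := by
  rw [← Finset.sum_pair hnm]
  exact hasSum_sum_of_ne_finset_zero (by simpa [not_or] using hf)

theorem eq_of_hasSum_mul_of_norm_le_one {ι : Type*} {q : ι → ℝ} {U : ι → ℂ} {κ : ℂ}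
    (hq : ∀ i, 0 ≤ q i) (hq1 : HasSum q 1) (hU : ∀ i, ‖U i‖ ≤ 1) (hκ : ‖κ‖ = 1)
    (hqU : HasSum (fun i => (q i : ℂ) * U i) κ) {i : ι} (hi : 0 < q i) : U i = κ := by
  have hκκ : conj κ * κ = 1 := by
    rw [mul_comm, Complex.mul_conj', hκ]; norm_num
  have hre : ∀ i, ‖conj κ * U i‖ ≤ 1 := fun i => by simpa [hκ] using hU i
  have hdefect : HasSum (fun i => q i * (1 - (conj κ * U i).re)) 0 := by
    have h := hq1.sub (Complex.hasSum_re ((hqU.mul_left (conj κ))))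
    rw [hκκ, Complex.one_re, sub_self] at h
    refine h.congr_fun fun i => ?_
    rw [mul_left_comm, Complex.re_ofReal_mul]
    ring
  have hzero := congrFun ((hasSum_zero_iff_of_nonneg fun i =>
    mul_nonneg (hq i) (sub_nonneg.2 ((Complex.re_le_norm _).trans (hre i)))).1 hdefect) i
  have h1 : conj κ * U i = 1 :=
    eq_one_of_re_eq_one_of_norm_le_one
      (by linarith [(mul_eq_zero.1 hzero).resolve_left hi.ne']) (hre i)
  calc U i = κ * (conj κ * U i) := by rw [← mul_assoc, mul_comm κ, hκκ, one_mul]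
    _ = κ := by rw [h1, mul_one]

theorem hasSum_mul_conj_eq_zero_of_forall_hasSum {ι : Type*} {f g : ι → ℂ} {w : ι → ℝ} {A B : ℝ}
    (h : ∀ x y : ℂ, HasSum (fun j => ‖x * f j + y * g j‖ ^ 2 * w j) (‖x‖ ^ 2 * A + ‖y‖ ^ 2 * B)) :
    HasSum (fun j => (w j : ℂ) * (f j * conj (g j))) 0 := by
  have hf : HasSum (fun j => ‖f j‖ ^ 2 * w j) A := by simpa using h 1 0
  have hg : HasSum (fun j => ‖g j‖ ^ 2 * w j) B := by simpa using h 0 1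
  rw [Complex.hasSum_iff]
  constructor
  · have := (((h 1 1).sub hf).sub hg).div_const 2
    simp only [norm_one, one_pow, one_mul, Complex.zero_re] at this ⊢
    rw [show (A + B - A - B) / 2 = 0 by ring] at this
    refine this.congr_fun fun j => ?_
    rw [Complex.re_ofReal_mul, ← Complex.normSq_eq_norm_sq, ← Complex.normSq_eq_norm_sq,
      ← Complex.normSq_eq_norm_sq, Complex.normSq_add]
    simp only [Complex.mul_re, Complex.conj_re, Complex.conj_im]
    ring
  · have := (((h 1 I).sub hf).sub hg).div_const 2
    simp only [norm_one, one_pow, one_mul, Complex.norm_I, Complex.zero_im] at this ⊢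
    rw [show (A + B - A - B) / 2 = 0 by ring] at this
    refine this.congr_fun fun j => ?_
    rw [Complex.im_ofReal_mul, ← Complex.normSq_eq_norm_sq, ← Complex.normSq_eq_norm_sq,
      ← Complex.normSq_eq_norm_sq, Complex.normSq_add]
    simp only [Complex.normSq_mul, Complex.normSq_I, Complex.mul_re, Complex.mul_im,
      Complex.conj_re, Complex.conj_im, Complex.I_re, Complex.I_im]
    ring

theorem hasSum_sq_norm_add_of_isometry {ι : Type*} {γ : ℕ → ℂ} {l : ι → ℂ} {v : ℕ → ℝ}
    {w : ι → ℝ} (hv : ∀ n, 0 < v n) {H : (ℕ → ℂ) → ι → ℂ}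
    (hH : ∀ a j, H a j = ∑' n, a n * (v n : ℂ) / (l j - γ n))
    (hiso : ∀ a : ℕ → ℂ, Summable (fun n => ‖a n‖ ^ 2 * v n) →
      Summable (fun j => ‖H a j‖ ^ 2 * w j) ∧
      ∑' j, ‖H a j‖ ^ 2 * w j = ∑' n, ‖a n‖ ^ 2 * v n)
    {n m : ℕ} (hnm : n ≠ m) (x y : ℂ) :
    HasSum (fun j => ‖x * (l j - γ n)⁻¹ + y * (l j - γ m)⁻¹‖ ^ 2 * w j)
      (‖x‖ ^ 2 * (v n)⁻¹ + ‖y‖ ^ 2 * (v m)⁻¹) := by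
  set a : ℕ → ℂ := Pi.single n (x / v n) + Pi.single m (y / v m)
  have ha : ∀ k, k ≠ n → k ≠ m → a k = 0 := fun k hkn hkm => by simp [a, hkn, hkm]
  have hnorm : HasSum (fun k => ‖a k‖ ^ 2 * v k) (‖x‖ ^ 2 * (v n)⁻¹ + ‖y‖ ^ 2 * (v m)⁻¹) := by
    convert hasSum_pair (f := fun k => ‖a k‖ ^ 2 * v k) hnm
      (fun k hkn hkm => by rw [ha k hkn hkm]; simp) using 1
    have := (hv n).ne'
    have := (hv m).ne'
    simp [a, hnm, hnm.symm, abs_of_pos (hv n), abs_of_pos (hv m)]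
    field_simp
  have hHa : ∀ j, H a j = x * (l j - γ n)⁻¹ + y * (l j - γ m)⁻¹ := fun j => by
    rw [hH, (hasSum_pair hnm fun k hkn hkm => by rw [ha k hkn hkm]; simp).tsum_eq]
    have : (v n : ℂ) ≠ 0 := by exact_mod_cast (hv n).ne'
    have : (v m : ℂ) ≠ 0 := by exact_mod_cast (hv m).ne'
    simp [a, hnm, hnm.symm]
    field_simp
  obtain ⟨hsum, htsum⟩ := hiso a hnorm.summable
  rw [← hnorm.tsum_eq, ← htsum]
  simpa only [hHa] using hsum.hasSum

theorem norm_div_conj_le_one (x : ℂ) : ‖x / conj x‖ ≤ 1 := by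
  rw [norm_div, Complex.norm_conj]
  exact div_self_le_one _

theorem norm_div_conj_of_ne_zero {x : ℂ} (hx : x ≠ 0) : ‖x / conj x‖ = 1 := by
  rw [norm_div, Complex.norm_conj, div_self (norm_ne_zero_iff.2 hx)]

theorem partial_fractions {a b c z : ℂ} (hab : a ≠ b) (ha : z ≠ a) (hb : z ≠ b) :
    (a - c) / (a - b) * (z - a)⁻¹ + (b - c) / (b - a) * (z - b)⁻¹
      = (z - c) * ((z - a)⁻¹ * (z - b)⁻¹) := by
  have hab' : a - b ≠ 0 := sub_ne_zero.2 hab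
  have hba' : b - a ≠ 0 := sub_ne_zero.2 hab.symm
  have ha' : z - a ≠ 0 := sub_ne_zero.2 ha
  have hb' : z - b ≠ 0 := sub_ne_zero.2 hb
  field_simp
  ring

theorem partial_fractions_mul_conj {a b c z : ℂ} (hab : a ≠ b) (hac : a ≠ c) (ha : z ≠ a)
    (hb : z ≠ b) (hc : z ≠ c) :
    ((a - c) / (a - b) * (z - a)⁻¹ + (b - c) / (b - a) * (z - b)⁻¹)
      * conj ((a - b) / (a - c) * (z - a)⁻¹ + (c - b) / (c - a) * (z - c)⁻¹)
      = ‖(z - a)⁻¹‖ ^ 2 * ((z - c) * conj (z - b) / conj ((z - c) * conj (z - b))) := by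
  rw [partial_fractions hab ha hb, partial_fractions hac ha hc]
  have hb' : conj (z - b) ≠ 0 := (map_ne_zero _).2 (sub_ne_zero.2 hb)
  have hc' : z - c ≠ 0 := sub_ne_zero.2 hc
  rw [← Complex.mul_conj' (z - a)⁻¹]
  simp only [map_mul, map_inv₀, conj_conj]
  field_simp

theorem div_mul_conj_div_eq {a b c : ℂ} (hab : a ≠ b) (hac : a ≠ c) :
    (a - c) / (a - b) * conj ((a - b) / (a - c))
      = (a - c) * conj (a - b) / conj ((a - c) * conj (a - b)) := by
  have hb : conj (a - b) ≠ 0 := (map_ne_zero _).2 (sub_ne_zero.2 hab)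
  have hc : a - c ≠ 0 := sub_ne_zero.2 hac
  simp only [map_mul, map_div₀, conj_conj]
  field_simp

theorem hasSum_mul_add_mul_conj {ι : Type*} {w : ι → ℝ} {f₁ f₂ g₁ g₂ : ι → ℂ}
    {s₁₁ s₁₂ s₂₁ s₂₂ : ℂ} (h₁₁ : HasSum (fun j => (w j : ℂ) * (f₁ j * conj (g₁ j))) s₁₁)
    (h₁₂ : HasSum (fun j => (w j : ℂ) * (f₁ j * conj (g₂ j))) s₁₂)
    (h₂₁ : HasSum (fun j => (w j : ℂ) * (f₂ j * conj (g₁ j))) s₂₁)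
    (h₂₂ : HasSum (fun j => (w j : ℂ) * (f₂ j * conj (g₂ j))) s₂₂) (α β α' β' : ℂ) :
    HasSum (fun j => (w j : ℂ) * ((α * f₁ j + β * f₂ j) * conj (α' * g₁ j + β' * g₂ j)))
      (α * conj α' * s₁₁ + α * conj β' * s₁₂ + β * conj α' * s₂₁ + β * conj β' * s₂₂) := by
  refine ((((h₁₁.mul_left (α * conj α')).add (h₁₂.mul_left (α * conj β'))).add
    (h₂₁.mul_left (β * conj α'))).add (h₂₂.mul_left (β * conj β'))).congr_fun fun j => ?_
  simp only [map_add, map_mul]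
  ring

theorem im_mul_conj_eq_zero_of_orthogonal {σ ι : Type*} {γ : σ → ℂ} {l : ι → ℂ} {v : σ → ℝ}
    {w : ι → ℝ} (hγ : Function.Injective γ) (hdisj : ∀ n j, γ n ≠ l j) (hv : ∀ n, 0 < v n)
    (hw : ∀ j, 0 < w j) (hself : ∀ n, HasSum (fun j => ‖(l j - γ n)⁻¹‖ ^ 2 * w j) (v n)⁻¹)
    (hne : ∀ n m, n ≠ m →
      HasSum (fun j => (w j : ℂ) * ((l j - γ n)⁻¹ * conj (l j - γ m)⁻¹)) 0)
    {p q n : σ} (hpq : p ≠ q) (hnp : n ≠ p) (hnq : n ≠ q) (j : ι) :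
    ((l j - γ q) * conj (l j - γ p) * conj ((γ n - γ q) * conj (γ n - γ p))).im = 0 := by
  have hnn : HasSum (fun j => (w j : ℂ) * ((l j - γ n)⁻¹ * conj (l j - γ n)⁻¹)) (v n)⁻¹ := by
    have := Complex.hasSum_ofReal.2 (hself n)
    push_cast at this
    exact this.congr_fun fun j => by rw [Complex.mul_conj']; ring
  have hpair := hasSum_mul_add_mul_conj hnn (hne n q hnq) (hne p n hnp.symm) (hne p q hpq)
    ((γ n - γ q) / (γ n - γ p)) ((γ p - γ q) / (γ p - γ n))
    ((γ n - γ p) / (γ n - γ q)) ((γ q - γ p) / (γ q - γ n))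
  simp only [mul_zero, add_zero] at hpair
  set Q : ι → ℝ := fun j => v n * (‖(l j - γ n)⁻¹‖ ^ 2 * w j)
  set X : ι → ℂ := fun j => (l j - γ q) * conj (l j - γ p)
  have hQ : HasSum Q 1 := by
    simpa only [mul_inv_cancel₀ (hv n).ne'] using (hself n).mul_left (v n)
  have hQpos : ∀ j, 0 < Q j := fun j => by
    have := norm_pos_iff.2 (inv_ne_zero (sub_ne_zero.2 (hdisj n j).symm))
    have := hv n
    have := hw j
    positivity
  have hQX : HasSum (fun j => (Q j : ℂ) * (X j / conj (X j)))
      ((γ n - γ q) / (γ n - γ p) * conj ((γ n - γ p) / (γ n - γ q))) := by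
    have := hpair.mul_left (v n : ℂ)
    rw [mul_left_comm, mul_inv_cancel₀ (by exact_mod_cast (hv n).ne'), mul_one] at this
    refine this.congr_fun fun j => ?_
    rw [partial_fractions_mul_conj (hγ.ne hnp) (hγ.ne hnq) (hdisj n j).symm (hdisj p j).symm
      (hdisj q j).symm]
    simp only [Q, X]
    push_cast
    ring
  rw [div_mul_conj_div_eq (hγ.ne hnp) (hγ.ne hnq)] at hQX
  have hY : (γ n - γ q) * conj (γ n - γ p) ≠ 0 :=
    mul_ne_zero (sub_ne_zero.2 (hγ.ne hnq)) ((map_ne_zero _).2 (sub_ne_zero.2 (hγ.ne hnp)))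
  exact im_mul_conj_eq_zero_of_div_conj_eq_div_conj <|
    eq_of_hasSum_mul_of_norm_le_one (fun j => (hQpos j).le) hQ
      (fun j => norm_div_conj_le_one (X j)) (norm_div_conj_of_ne_zero hY) hQX (hQpos j)

-- The left side is `I * (F - conj F)` with `F = (z - q) * conj (z - p) * conj ζ`, expanded.
theorem quadric_eq_neg_two_mul_im (p q ζ z : ℂ) :
    ((2 * ζ.im : ℝ) : ℂ) * normSq z + conj (I * (ζ * p - conj ζ * q)) * z
      + I * (ζ * p - conj ζ * q) * conj z + ((-2 * (conj ζ * q * conj p).im : ℝ) : ℂ)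
      = ((-2 * ((z - q) * conj (z - p) * conj ζ).im : ℝ) : ℂ) := by
  apply Complex.ext <;>
    simp [Complex.mul_re, Complex.mul_im, Complex.normSq_apply] <;> ring

theorem mul_lt_normSq_of_two_roots {a c : ℝ} {b z₁ z₂ : ℂ} (hab : a ≠ 0 ∨ b ≠ 0) (hz : z₁ ≠ z₂)
    (h₁ : (a : ℂ) * normSq z₁ + conj b * z₁ + b * conj z₁ + c = 0)
    (h₂ : (a : ℂ) * normSq z₂ + conj b * z₂ + b * conj z₂ + c = 0) : a * c < normSq b := by
  have hsq : ∀ z : ℂ, (a : ℂ) * normSq z + conj b * z + b * conj z + c = 0 →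
      normSq (a * z + b) = normSq b - a * c := fun z hz => by
    apply Complex.ofReal_injective
    push_cast
    rw [← Complex.mul_conj] at hz
    rw [← Complex.mul_conj, ← Complex.mul_conj]
    simp only [map_add, map_mul, Complex.conj_ofReal]
    linear_combination (a : ℂ) * hz
  by_contra hle
  have hroot : ∀ z : ℂ, (a : ℂ) * normSq z + conj b * z + b * conj z + c = 0 → a * z + b = 0 :=
    fun z hz => normSq_eq_zero.1 (le_antisymm (by linarith [hsq z hz]) (normSq_nonneg _))
  have ha : (a : ℂ) = 0 := by
    have h : (a : ℂ) * (z₁ - z₂) = 0 := by linear_combination hroot z₁ h₁ - hroot z₂ h₂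
    exact (mul_eq_zero.1 h).resolve_right (sub_ne_zero.2 hz)
  have hb : b = 0 := by simpa [ha] using hroot z₁ h₁
  exact hab.elim (fun h => h (by exact_mod_cast ha)) (fun h => h hb)

theorem exists_generalized_circle {p q ζ : ℂ} (hpq : p ≠ q) (hζ : ζ ≠ 0) :
    ∃ (a c : ℝ) (b : ℂ), a * c < normSq b ∧ ∀ z, ((z - q) * conj (z - p) * conj ζ).im = 0 →
      (a : ℂ) * normSq z + conj b * z + b * conj z + c = 0 := by
  have hcircle : ∀ z, ((z - q) * conj (z - p) * conj ζ).im = 0 →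
      ((2 * ζ.im : ℝ) : ℂ) * normSq z + conj (I * (ζ * p - conj ζ * q)) * z
        + I * (ζ * p - conj ζ * q) * conj z + ((-2 * (conj ζ * q * conj p).im : ℝ) : ℂ) = 0 :=
    fun z hz => by rw [quadric_eq_neg_two_mul_im, hz]; simp
  refine ⟨_, _, _, mul_lt_normSq_of_two_roots ?_ hpq (hcircle p (by simp)) (hcircle q (by simp)),
    hcircle⟩
  by_contra! h
  obtain ⟨hre, hb⟩ := h
  rw [Complex.conj_eq_iff_im.2 (by linarith), ← mul_sub] at hb
  exact mul_ne_zero Complex.I_ne_zero (mul_ne_zero hζ (sub_ne_zero.2 hpq)) hb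

theorem stmt_14_general {ι : Type*} (γ : ℕ → ℂ) (hγ : Function.Injective γ)
    (l : ι → ℂ)
    (hdisj : ∀ n j, γ n ≠ l j)
    (v : ℕ → ℝ) (hv : ∀ n, 0 < v n) (w : ι → ℝ) (hw : ∀ j, 0 < w j)
    (H : (ℕ → ℂ) → ι → ℂ)
    (hH : ∀ a j, H a j = ∑' n, a n * (v n : ℂ) / (l j - γ n))
    (hiso : ∀ a : ℕ → ℂ, Summable (fun n => ‖a n‖ ^ 2 * v n) →
      Summable (fun j => ‖H a j‖ ^ 2 * w j) ∧
      ∑' j, ‖H a j‖ ^ 2 * w j = ∑' n, ‖a n‖ ^ 2 * v n) :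
    ∃ (a c : ℝ) (b : ℂ), a * c < normSq b ∧
      ∀ z ∈ Set.range γ ∪ Set.range l,
        (a : ℂ) * normSq z + (starRingEnd ℂ) b * z + b * (starRingEnd ℂ) z + (c : ℂ) = 0 := by
  have hpair {n m : ℕ} (hnm : n ≠ m) := hasSum_sq_norm_add_of_isometry hv hH hiso hnm
  have hself (n : ℕ) : HasSum (fun j => ‖(l j - γ n)⁻¹‖ ^ 2 * w j) (v n)⁻¹ := by
    simpa using hpair n.succ_ne_self.symm 1 0
  have hne (n m : ℕ) (hnm : n ≠ m) := hasSum_mul_conj_eq_zero_of_forall_hasSum (hpair hnm)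
  set ρ : ℂ → ℂ := fun z => (z - γ 1) * conj (z - γ 0)
  have hρ : ∀ j n, n ≠ 0 → n ≠ 1 → (ρ (l j) * conj (ρ (γ n))).im = 0 := fun j n h0 h1 =>
    im_mul_conj_eq_zero_of_orthogonal hγ hdisj hv hw hself hne zero_ne_one h0 h1 j
  obtain ⟨j₀⟩ : Nonempty ι := by
    by_contra hι
    rw [not_nonempty_iff] at hι
    simpa [(hv 0).ne'] using (hself 0).unique hasSum_empty
  have hρ_ne {z : ℂ} (h0 : z ≠ γ 0) (h1 : z ≠ γ 1) : ρ z ≠ 0 :=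
    mul_ne_zero (sub_ne_zero.2 h1) ((map_ne_zero _).2 (sub_ne_zero.2 h0))
  obtain ⟨a, c, b, hnd, hcircle⟩ := exists_generalized_circle (hγ.ne zero_ne_one)
    (hρ_ne (hγ.ne (by norm_num : 2 ≠ 0)) (hγ.ne (by norm_num : 2 ≠ 1)))
  refine ⟨a, c, b, hnd, ?_⟩
  rintro z (⟨n, rfl⟩ | ⟨j, rfl⟩)
  · apply hcircle
    rcases n with _ | _ | n
    · simp
    · simp
    · exact im_mul_conj_eq_zero_of_common (hρ_ne (hdisj 0 j₀).symm (hdisj 1 j₀).symm)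
        (hρ j₀ (n + 2) (by omega) (by omega)) (hρ j₀ 2 (by norm_num) (by norm_num))
  · exact hcircle _ (hρ j 2 (by norm_num) (by norm_num))

/-- Localization: if the discrete Hilbert transform `H_v(Γ,Λ) : ℓ²_v → ℓ²_w` is unitary
(an isometry of `ℓ²_v` onto `ℓ²_w`) and `Γ ∪ Λ` has at least four points, then
`Γ ∪ Λ` lies on a single circle or straight line in `ℂ`. -/
theorem stmt_14 {ι : Type*} [Countable ι] (γ : ℕ → ℂ) (hγ : Function.Injective γ)
    (l : ι → ℂ) (hl : Function.Injective l)
    (hdisj : ∀ n j, γ n ≠ l j)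
    (v : ℕ → ℝ) (hv : ∀ n, 0 < v n) (w : ι → ℝ) (hw : ∀ j, 0 < w j)
    (hΛ : ∀ j, Summable (fun n => v n / ‖l j - γ n‖ ^ 2))
    (H : (ℕ → ℂ) → ι → ℂ)
    (hH : ∀ a j, H a j = ∑' n, a n * (v n : ℂ) / (l j - γ n))
    (hiso : ∀ a : ℕ → ℂ, Summable (fun n => ‖a n‖ ^ 2 * v n) →
      Summable (fun j => ‖H a j‖ ^ 2 * w j) ∧
      ∑' j, ‖H a j‖ ^ 2 * w j = ∑' n, ‖a n‖ ^ 2 * v n)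
    (hsurj : ∀ b : ι → ℂ, Summable (fun j => ‖b j‖ ^ 2 * w j) →
      ∃ a : ℕ → ℂ, Summable (fun n => ‖a n‖ ^ 2 * v n) ∧ ∀ j, H a j = b j)
    (hfour : ∃ s : Finset ℂ, s.card = 4 ∧ ↑s ⊆ Set.range γ ∪ Set.range l) :
    ∃ (a c : ℝ) (b : ℂ), a * c < normSq b ∧
      ∀ z ∈ Set.range γ ∪ Set.range l,
        (a : ℂ) * normSq z + (starRingEnd ℂ) b * z + b * (starRingEnd ℂ) z + (c : ℂ) = 0 :=
  stmt_14_general γ hγ l hdisj v hv w hw H hH hiso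
end

section
/- Let $\mathscr{H}$ be a Hilbert space of complex-valued functions on a set $\Omega \subset \mathbb{C}$ with $\dim \mathscr{H} \geq 2$, satisfying: (A1) if $f \in \mathscr{H}$ and $f(\lambda) = 0$ for $\lambda \in \Omega$ then $z \mapsto f(z)/(z-\lambda)$ extends to a function in $\mathscr{H}$; (A2) point evaluations are bounded (reproducing kernels $\kappa_\lambda$ exist for all $\lambda \in \Omega$). Suppose $(\kappa_{\gamma_n}/\|\kappa_{\gamma_n}\|)$ is a Riesz basis of $\mathscr{H}$ for distinct points $\gamma_n \in \Omega$, with biorthogonal basis $(g_n)$, and there exists $\lambda \in \Omega \setminus \Gamma$ with $\kappa_\lambda \neq 0$. Then there exists a function $E$ on $\Omega$, unique up to a nonzero multiplicative constant, and nonzero constants $E'(\gamma_n)$, such that $g_n(z) = \frac{E(z)}{E'(\gamma_n)(z - \gamma_n)}$ for all $n$ and $z \in \Omega \setminus \{\gamma_n\}$, and $E(z) \neq 0$ for all $z \in \Omega \setminus \Gamma$. -/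
/-!
Put `E z = g₀(z) (z - γ₀)`. For `n ≠ 0`, `gₙ` vanishes at `γ₀`, so by (A1) `gₙ = (z - γ₀) h`
where `h` vanishes at every `γₘ` except `γ₀` and `γₙ`. As the normalized kernels at `Γ` form a
Riesz basis, `Γ` is a uniqueness set, so `h` is a combination of `g₀` and `gₙ`; evaluating at
`γₙ` fixes the coefficient of `gₙ`, and what remains is `gₙ(z) (z - γₙ) = cₙ E(z)`.
The same division at a zero `p ∉ Γ` of `g₀` shows that `g₀` vanishes off `γ₀`, so `E ≡ 0` and
every `gₙ` vanishes off `γₙ`. Then `κ_λ` is orthogonal to all `gₙ`, which is impossible: `(gₙ)`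
is the image of the orthonormal basis under the adjoint of `T⁻¹`, hence complete.
-/

open Complex

open scoped InnerProductSpace

namespace HilbertBasis

variable {ι 𝕜 E F : Type*} [RCLike 𝕜] [NormedAddCommGroup E] [InnerProductSpace 𝕜 E]
  [NormedAddCommGroup F] [InnerProductSpace 𝕜 F]

theorem eq_zero_of_forall_inner_eq_zero (b : HilbertBasis ι 𝕜 E) {x : E}
    (h : ∀ i, ⟪b i, x⟫_𝕜 = 0) : x = 0 :=
  b.repr.injective <| by ext i; simp [b.repr_apply_apply, h]

variable [CompleteSpace E] [CompleteSpace F]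

theorem eq_zero_of_forall_inner_map_eq_zero (b : HilbertBasis ι 𝕜 E) (T : E ≃L[𝕜] F) {y : F}
    (h : ∀ i, ⟪T (b i), y⟫_𝕜 = 0) : y = 0 := by
  have hadj : ContinuousLinearMap.adjoint (T : E →L[𝕜] F) y = 0 :=
    b.eq_zero_of_forall_inner_eq_zero fun i => by
      rw [ContinuousLinearMap.adjoint_inner_right]; exact h i
  refine inner_self_eq_zero (𝕜 := 𝕜) |>.mp ?_
  calc ⟪y, y⟫_𝕜 = ⟪(T : E →L[𝕜] F) (T.symm y), y⟫_𝕜 := by simp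
    _ = 0 := by rw [← ContinuousLinearMap.adjoint_inner_right, hadj, inner_zero_right]

theorem inner_map_adjoint_symm [DecidableEq ι] (b : HilbertBasis ι 𝕜 E) (T : E ≃L[𝕜] F)
    (i j : ι) :
    ⟪T (b i), ContinuousLinearMap.adjoint (T.symm : F →L[𝕜] E) (b j)⟫_𝕜 =
      if i = j then 1 else 0 := by
  rw [ContinuousLinearMap.adjoint_inner_right, ContinuousLinearEquiv.coe_coe,
    T.symm_apply_apply, orthonormal_iff_ite.mp b.orthonormal]

theorem eq_zero_of_forall_inner_adjoint_symm_eq_zero (b : HilbertBasis ι 𝕜 E) (T : E ≃L[𝕜] F)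
    {y : F} (h : ∀ i, ⟪ContinuousLinearMap.adjoint (T.symm : F →L[𝕜] E) (b i), y⟫_𝕜 = 0) :
    y = 0 := by
  have : T.symm y = 0 := b.eq_zero_of_forall_inner_eq_zero fun i => by
    rw [← h i, ContinuousLinearMap.adjoint_inner_left, ContinuousLinearEquiv.coe_coe]
  simpa using congrArg T this

end HilbertBasis

section Interpolation

variable {Ω : Set ℂ} {V ι : Type*} [AddCommGroup V] [Module ℂ V] (F : V →ₗ[ℂ] Ω → ℂ)

def HasDivisionProperty : Prop :=
  ∀ (f : V) (q : Ω), F f q = 0 → ∃ f₀ : V, ∀ p : Ω, F f p = ((p : ℂ) - q) * F f₀ p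

def IsUniquenessSet (γ : ι → Ω) : Prop :=
  ∀ f : V, (∀ m, F f (γ m) = 0) → f = 0

structure IsBiorthogonal (γ : ι → Ω) (g : ι → V) : Prop where
  apply_of_ne {n m : ι} : n ≠ m → F (g n) (γ m) = 0
  apply_self_ne_zero (n : ι) : F (g n) (γ n) ≠ 0

variable {F} {γ : ι → Ω} {g : ι → V}

namespace IsBiorthogonal

theorem eq_sum_of_apply_eq_zero [DecidableEq ι] (hg : IsBiorthogonal F γ g)
    (hΓ : IsUniquenessSet F γ) (s : Finset ι) {f : V}
    (hf : ∀ m ∉ s, F f (γ m) = 0) :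
    f = ∑ i ∈ s, (F f (γ i) / F (g i) (γ i)) • g i := by
  refine sub_eq_zero.mp (hΓ _ fun m => ?_)
  simp only [map_sub, map_sum, map_smul, Pi.sub_apply, Finset.sum_apply, Pi.smul_apply,
    smul_eq_mul]
  rw [Finset.sum_eq_single m (fun i _ him => by rw [hg.apply_of_ne him, mul_zero])
    (fun hm => by rw [hf m hm, zero_div, zero_mul]),
    div_mul_cancel₀ _ (hg.apply_self_ne_zero m), sub_self]

theorem exists_apply_mul_sub_eq_sum [DecidableEq ι] (hg : IsBiorthogonal F γ g)
    (hΓ : IsUniquenessSet F γ) (hdiv : HasDivisionProperty F) {a : ι} {q : Ω} (hq : F (g a) q = 0)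
    {s : Finset ι} (ha : a ∈ s) (hs : ∀ m ∉ s, (γ m : ℂ) ≠ q) :
    ∃ c : ι → ℂ, ∀ z : Ω, F (g a) z * ((γ a : ℂ) - z) =
      ((γ a : ℂ) - q) * ((z : ℂ) - q) * ∑ i ∈ s.erase a, c i * F (g i) z := by
  obtain ⟨h, hh⟩ := hdiv _ _ hq
  have hh_γ : ∀ m ∉ s, F h (γ m) = 0 := fun m hm => by
    have := hh (γ m)
    rw [hg.apply_of_ne (ne_of_mem_of_not_mem ha hm)] at this
    exact (mul_eq_zero.mp this.symm).resolve_left (sub_ne_zero.mpr (hs m hm))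
  set c : ι → ℂ := fun i => F h (γ i) / F (g i) (γ i)
  have hF : ∀ z, F h z = c a * F (g a) z + ∑ i ∈ s.erase a, c i * F (g i) z := fun z => by
    conv_lhs => rw [hg.eq_sum_of_apply_eq_zero hΓ s hh_γ]
    simp only [map_sum, map_smul, Finset.sum_apply, Pi.smul_apply, smul_eq_mul]
    exact (Finset.add_sum_erase s _ ha).symm
  have hca : ((γ a : ℂ) - q) * c a = 1 := by
    refine mul_right_cancel₀ (hg.apply_self_ne_zero a) ?_
    have hρ : ∑ i ∈ s.erase a, c i * F (g i) (γ a) = 0 := Finset.sum_eq_zero fun i hi => by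
      rw [hg.apply_of_ne (Finset.ne_of_mem_erase hi), mul_zero]
    linear_combination -(hh (γ a)).trans (by rw [hF, hρ, add_zero])
  refine ⟨c, fun z => ?_⟩
  have hz := (hh z).trans (by rw [hF z])
  linear_combination ((γ a : ℂ) - q) * hz + ((z : ℂ) - q) * F (g a) z * hca

theorem apply_eq_zero_of_apply_eq_zero (hg : IsBiorthogonal F γ g)
    (hΓ : IsUniquenessSet F γ) (hdiv : HasDivisionProperty F) {a : ι} {p : Ω}
    (hp : (p : ℂ) ∉ Set.range fun n => (γ n : ℂ)) (hpa : F (g a) p = 0) {z : Ω}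
    (hz : (z : ℂ) ≠ γ a) : F (g a) z = 0 := by
  classical
  obtain ⟨c, hc⟩ := hg.exists_apply_mul_sub_eq_sum hΓ hdiv hpa (Finset.mem_singleton_self a)
    fun m _ hm => hp ⟨m, hm⟩
  have := hc z
  rw [Finset.erase_singleton, Finset.sum_empty, mul_zero] at this
  exact (mul_eq_zero.mp this).resolve_right (sub_ne_zero.mpr hz.symm)

theorem exists_apply_mul_sub_eq_mul (hg : IsBiorthogonal F γ g)
    (hΓ : IsUniquenessSet F γ) (hdiv : HasDivisionProperty F)
    (hγ : Function.Injective γ) (a b : ι) :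
    ∃ c : ℂ, ∀ z : Ω, F (g a) z * ((z : ℂ) - γ a) = c * (F (g b) z * ((z : ℂ) - γ b)) := by
  classical
  rcases eq_or_ne a b with rfl | hab
  · exact ⟨1, fun z => (one_mul _).symm⟩
  obtain ⟨c, hc⟩ := hg.exists_apply_mul_sub_eq_sum hΓ hdiv (hg.apply_of_ne hab)
    (Finset.mem_insert_self a {b}) fun m hm => by
      simp only [Finset.mem_insert, Finset.mem_singleton, not_or] at hm
      exact Subtype.coe_injective.ne (hγ.ne hm.2)
  refine ⟨-((γ a : ℂ) - γ b) * c b, fun z => ?_⟩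
  have := hc z
  rw [Finset.erase_insert (by simpa using hab), Finset.sum_singleton] at this
  linear_combination -this

theorem exists_ne_zero_apply_mul_sub_eq_mul (hg : IsBiorthogonal F γ g)
    (hΓ : IsUniquenessSet F γ) (hdiv : HasDivisionProperty F)
    (hγ : Function.Injective γ) (a b : ι) {l : Ω}
    (hl : F (g b) l * ((l : ℂ) - γ b) ≠ 0) :
    ∃ c : ℂ, c ≠ 0 ∧
      ∀ z : Ω, F (g a) z * ((z : ℂ) - γ a) = c * (F (g b) z * ((z : ℂ) - γ b)) := by
  obtain ⟨c, hc⟩ := hg.exists_apply_mul_sub_eq_mul hΓ hdiv hγ a b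
  obtain ⟨c', hc'⟩ := hg.exists_apply_mul_sub_eq_mul hΓ hdiv hγ b a
  refine ⟨c, fun hc0 => hl ?_, hc⟩
  rw [hc' l, hc l, hc0, zero_mul, mul_zero]

theorem apply_mul_sub_ne_zero (hg : IsBiorthogonal F γ g)
    (hΓ : IsUniquenessSet F γ) (hdiv : HasDivisionProperty F)
    (hγ : Function.Injective γ) (n₀ : ι) {l : Ω}
    (hl : (l : ℂ) ∉ Set.range fun n => (γ n : ℂ)) {n : ι} (hln : F (g n) l ≠ 0) {p : Ω}
    (hp : (p : ℂ) ∉ Set.range fun n => (γ n : ℂ)) : F (g n₀) p * ((p : ℂ) - γ n₀) ≠ 0 := by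
  intro hE
  have hp₀ : F (g n₀) p = 0 :=
    (mul_eq_zero.mp hE).resolve_right (sub_ne_zero.mpr fun h => hp ⟨n₀, h.symm⟩)
  obtain ⟨c, hc⟩ := hg.exists_apply_mul_sub_eq_mul hΓ hdiv hγ n n₀
  have := hc l
  rw [hg.apply_eq_zero_of_apply_eq_zero hΓ hdiv hp hp₀ fun h => hl ⟨n₀, h.symm⟩, zero_mul,
    mul_zero] at this
  exact hln <| (mul_eq_zero.mp this).resolve_right (sub_ne_zero.mpr fun h => hl ⟨n, h.symm⟩)

end IsBiorthogonal

end Interpolation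

section RieszBasis

variable {Ω : Set ℂ} {H ι : Type*} [NormedAddCommGroup H] [InnerProductSpace ℂ H]
  {F : H →ₗ[ℂ] Ω → ℂ} {κ : Ω → H} {γ : ι → Ω}

theorem kernel_ne_zero_of_riesz_basis (e : HilbertBasis ι ℂ H) (T : H ≃L[ℂ] H)
    (hRiesz : ∀ n, T (e n) = ‖κ (γ n)‖⁻¹ • κ (γ n)) (n : ι) : κ (γ n) ≠ 0 := fun h => by
  have := hRiesz n
  rw [h, smul_zero, T.map_eq_zero_iff] at this
  exact e.orthonormal.ne_zero n this

theorem isBiorthogonal_of_riesz_basis [DecidableEq ι] {g : ι → H} (e : HilbertBasis ι ℂ H)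
    (T : H ≃L[ℂ] H) (hRiesz : ∀ n, T (e n) = ‖κ (γ n)‖⁻¹ • κ (γ n))
    (hbio : ∀ n m, F (g n) (γ m) = if n = m then (‖κ (γ m)‖ : ℂ) else 0) :
    IsBiorthogonal F γ g where
  apply_of_ne hnm := by rw [hbio, if_neg hnm]
  apply_self_ne_zero n := by
    rw [hbio, if_pos rfl]
    exact ofReal_ne_zero.mpr (norm_ne_zero_iff.mpr (kernel_ne_zero_of_riesz_basis e T hRiesz n))

variable [CompleteSpace H]

theorem isUniquenessSet_of_riesz_basis (hκ : ∀ (f : H) (p : Ω), F f p = ⟪κ p, f⟫_ℂ)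
    (e : HilbertBasis ι ℂ H) (T : H ≃L[ℂ] H) (hRiesz : ∀ n, T (e n) = ‖κ (γ n)‖⁻¹ • κ (γ n)) :
    IsUniquenessSet F γ := fun f hf =>
  e.eq_zero_of_forall_inner_map_eq_zero T fun m => by
    rw [hRiesz, RCLike.real_smul_eq_coe_smul (K := ℂ), inner_smul_real_left, ← hκ, hf,
      smul_zero]

theorem eq_adjoint_symm_of_riesz_basis [DecidableEq ι] {g : ι → H}
    (hκ : ∀ (f : H) (p : Ω), F f p = ⟪κ p, f⟫_ℂ)
    (e : HilbertBasis ι ℂ H) (T : H ≃L[ℂ] H) (hRiesz : ∀ n, T (e n) = ‖κ (γ n)‖⁻¹ • κ (γ n))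
    (hbio : ∀ n m, F (g n) (γ m) = if n = m then (‖κ (γ m)‖ : ℂ) else 0) (n : ι) :
    g n = ContinuousLinearMap.adjoint (T.symm : H →L[ℂ] H) (e n) := by
  refine sub_eq_zero.mp (isUniquenessSet_of_riesz_basis hκ e T hRiesz _ fun m => ?_)
  have hnorm : (‖κ (γ m)‖ : ℂ) ≠ 0 :=
    ofReal_ne_zero.mpr (norm_ne_zero_iff.mpr (kernel_ne_zero_of_riesz_basis e T hRiesz m))
  have hdual := e.inner_map_adjoint_symm T m n
  rw [hRiesz, RCLike.real_smul_eq_coe_smul (K := ℂ), inner_smul_real_left, ← hκ, real_smul,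
    ofReal_inv, inv_mul_eq_iff_eq_mul₀ hnorm] at hdual
  rw [map_sub, Pi.sub_apply, hbio, hdual, sub_eq_zero]
  by_cases hnm : n = m
  · simp [hnm]
  · simp [hnm, Ne.symm hnm]

theorem exists_apply_ne_zero_of_riesz_basis [DecidableEq ι] {g : ι → H}
    (hκ : ∀ (f : H) (p : Ω), F f p = ⟪κ p, f⟫_ℂ)
    (e : HilbertBasis ι ℂ H) (T : H ≃L[ℂ] H) (hRiesz : ∀ n, T (e n) = ‖κ (γ n)‖⁻¹ • κ (γ n))
    (hbio : ∀ n m, F (g n) (γ m) = if n = m then (‖κ (γ m)‖ : ℂ) else 0) {l : Ω}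
    (hl : κ l ≠ 0) : ∃ n, F (g n) l ≠ 0 := by
  by_contra! h
  refine hl (e.eq_zero_of_forall_inner_adjoint_symm_eq_zero T fun n => ?_)
  rw [← eq_adjoint_symm_of_riesz_basis hκ e T hRiesz hbio, inner_eq_zero_symm, ← hκ]
  exact h n

end RieszBasis

theorem stmt_18_general (Ω : Set ℂ) {H : Type*} [NormedAddCommGroup H] [InnerProductSpace ℂ H]
    [CompleteSpace H]
    (toFun : H →ₗ[ℂ] (Ω → ℂ))
    (κ : Ω → H) (hκ : ∀ (f : H) (p : Ω), toFun f p = (inner ℂ (κ p) f : ℂ))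
    (hA1 : ∀ (f : H) (q : Ω), toFun f q = 0 →
      ∃ f₀ : H, ∀ p : Ω, toFun f p = ((p : ℂ) - (q : ℂ)) * toFun f₀ p)
    (γ : ℕ → Ω) (hγ : Function.Injective γ)
    (e : HilbertBasis ℕ ℂ H) (T : H ≃L[ℂ] H)
    (hRiesz : ∀ n, T (e n) = (‖κ (γ n)‖)⁻¹ • κ (γ n))
    (g : ℕ → H)
    (hbio : ∀ n m, toFun (g n) (γ m) = if n = m then (‖κ (γ m)‖ : ℂ) else 0)
    (hpoint : ∃ p : Ω, ((p : ℂ) ∉ Set.range (fun n => ((γ n : Ω) : ℂ))) ∧ κ p ≠ 0) :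
    ∃ (E : Ω → ℂ) (d : ℕ → ℂ), (∀ n, d n ≠ 0) ∧
      (∀ n, ∀ p : Ω, (p : ℂ) ≠ ((γ n : Ω) : ℂ) →
        toFun (g n) p = E p / (d n * ((p : ℂ) - ((γ n : Ω) : ℂ)))) ∧
      (∀ p : Ω, (p : ℂ) ∉ Set.range (fun n => ((γ n : Ω) : ℂ)) → E p ≠ 0) ∧
      (∀ (E' : Ω → ℂ) (d' : ℕ → ℂ), (∀ n, d' n ≠ 0) →
        (∀ n, ∀ p : Ω, (p : ℂ) ≠ ((γ n : Ω) : ℂ) →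
          toFun (g n) p = E' p / (d' n * ((p : ℂ) - ((γ n : Ω) : ℂ)))) →
        ∃ c : ℂ, c ≠ 0 ∧ ∀ p : Ω, (p : ℂ) ∉ Set.range (fun n => ((γ n : Ω) : ℂ)) →
          E' p = c * E p) := by
  obtain ⟨l, hl, hκl⟩ := hpoint
  have hΓ : IsUniquenessSet toFun γ := isUniquenessSet_of_riesz_basis hκ e T hRiesz
  have hg : IsBiorthogonal toFun γ g := isBiorthogonal_of_riesz_basis e T hRiesz hbio
  obtain ⟨k, hk⟩ := exists_apply_ne_zero_of_riesz_basis hκ e T hRiesz hbio hκl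
  have hE (p : Ω) (hp : (p : ℂ) ∉ Set.range fun n => (γ n : ℂ)) :
      toFun (g 0) p * ((p : ℂ) - γ 0) ≠ 0 :=
    hg.apply_mul_sub_ne_zero hΓ hA1 hγ 0 hl hk hp
  choose c hc0 hc using fun n => hg.exists_ne_zero_apply_mul_sub_eq_mul hΓ hA1 hγ n 0 (hE l hl)
  refine ⟨fun p => toFun (g 0) p * ((p : ℂ) - γ 0), fun n => (c n)⁻¹,
    fun n => inv_ne_zero (hc0 n), fun n p hp => ?_, hE,
    fun E' d' hd' hE' => ⟨d' 0, hd' 0, fun p hp => ?_⟩⟩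
  · rw [eq_div_iff (mul_ne_zero (inv_ne_zero (hc0 n)) (sub_ne_zero.mpr hp))]
    linear_combination (c n)⁻¹ * hc n p +
      toFun (g 0) p * ((p : ℂ) - γ 0) * inv_mul_cancel₀ (hc0 n)
  · have := hE' 0 p fun h => hp ⟨0, h.symm⟩
    rw [eq_div_iff (mul_ne_zero (hd' 0) (sub_ne_zero.mpr fun h => hp ⟨0, h.symm⟩))] at this
    linear_combination -this

/-- Let `𝓗` be a Hilbert space of functions on `Ω ⊂ ℂ` (realized via an injective linear
evaluation map `toFun` and reproducing kernels `κ`), of dimension at least 2, satisfying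
the division axiom (A1). If the normalized reproducing kernels at distinct points
`γ n ∈ Ω` form a Riesz basis with biorthogonal basis `(g n)`, and some point of
`Ω \ Γ` has nonzero kernel, then there is a generating function `E`, unique up to a
nonzero multiplicative constant on `Ω \ Γ`, and nonzero constants `E'(γ n)`, with
`g n = E(z)/(E'(γ n)(z - γ n))` and `E ≠ 0` off `Γ`. -/
theorem stmt_18 (Ω : Set ℂ) {H : Type*} [NormedAddCommGroup H] [InnerProductSpace ℂ H]
    [CompleteSpace H]
    (toFun : H →ₗ[ℂ] (Ω → ℂ)) (htoFun : Function.Injective toFun)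
    (hdim : ∃ f g : H, LinearIndependent ℂ ![f, g])
    (κ : Ω → H) (hκ : ∀ (f : H) (p : Ω), toFun f p = (inner ℂ (κ p) f : ℂ))
    (hA1 : ∀ (f : H) (q : Ω), toFun f q = 0 →
      ∃ f₀ : H, ∀ p : Ω, toFun f p = ((p : ℂ) - (q : ℂ)) * toFun f₀ p)
    (γ : ℕ → Ω) (hγ : Function.Injective γ)
    (e : HilbertBasis ℕ ℂ H) (T : H ≃L[ℂ] H)
    (hRiesz : ∀ n, T (e n) = (‖κ (γ n)‖)⁻¹ • κ (γ n))
    (g : ℕ → H)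
    (hbio : ∀ n m, toFun (g n) (γ m) = if n = m then (‖κ (γ m)‖ : ℂ) else 0)
    (hpoint : ∃ p : Ω, ((p : ℂ) ∉ Set.range (fun n => ((γ n : Ω) : ℂ))) ∧ κ p ≠ 0) :
    ∃ (E : Ω → ℂ) (d : ℕ → ℂ), (∀ n, d n ≠ 0) ∧
      (∀ n, ∀ p : Ω, (p : ℂ) ≠ ((γ n : Ω) : ℂ) →
        toFun (g n) p = E p / (d n * ((p : ℂ) - ((γ n : Ω) : ℂ)))) ∧
      (∀ p : Ω, (p : ℂ) ∉ Set.range (fun n => ((γ n : Ω) : ℂ)) → E p ≠ 0) ∧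
      (∀ (E' : Ω → ℂ) (d' : ℕ → ℂ), (∀ n, d' n ≠ 0) →
        (∀ n, ∀ p : Ω, (p : ℂ) ≠ ((γ n : Ω) : ℂ) →
          toFun (g n) p = E' p / (d' n * ((p : ℂ) - ((γ n : Ω) : ℂ)))) →
        ∃ c : ℂ, c ≠ 0 ∧ ∀ p : Ω, (p : ℂ) ∉ Set.range (fun n => ((γ n : Ω) : ℂ)) →
          E' p = c * E p) :=
  stmt_18_general Ω toFun κ hκ hA1 γ hγ e T hRiesz g hbio hpoint
end
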